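/- Let d ≥ 2, let 0 < p ≤ 1, and let ρ_m = p|ψ_d⟩⟨ψ_d| + ((1-p)/d)·I_d with |ψ_d⟩ = (1/√d)·Σ_{i=1}^d |i⟩. Then the geometric measure of coherence of ρ_m satisfies 1 - 1/d - ((d-1)/d)·√(1-p²) ≤ C_g(ρ_m) ≤ 1 - 1/d. -/

import Mathlib

open scoped ComplexOrder

open Matrix Classical in
/-- The positive semidefinite square root of a matrix (junk value `0` if not PSD). -/
noncomputable def msqrt {d : ℕ} (A : Matrix (Fin d) (Fin d) ℂ) : Matrix (Fin d) (Fin d) ℂ :=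
  if h : A.PosSemidef then
    (h.1.eigenvectorUnitary : Matrix (Fin d) (Fin d) ℂ) *
      diagonal ((↑) ∘ (√·) ∘ h.1.eigenvalues) * (star h.1.eigenvectorUnitary : Matrix (Fin d) (Fin d) ℂ)
  else 0

/-- A density matrix: positive semidefinite with trace 1. -/
def IsDensity {d : ℕ} (ρ : Matrix (Fin d) (Fin d) ℂ) : Prop :=
  ρ.PosSemidef ∧ ρ.trace = 1

/-- An incoherent state: a diagonal density matrix. -/
def IsIncoherent {d : ℕ} (σ : Matrix (Fin d) (Fin d) ℂ) : Prop :=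
  IsDensity σ ∧ σ.IsDiag

/-- The fidelity `F(ρ,σ) = (Tr √(√σ ρ √σ))²`. -/
noncomputable def fid {d : ℕ} (ρ σ : Matrix (Fin d) (Fin d) ℂ) : ℝ :=
  ((msqrt (msqrt σ * ρ * msqrt σ)).trace.re) ^ 2

/-- The geometric measure of coherence `C_g(ρ) = 1 - sup {F(ρ,σ) : σ incoherent}`. -/
noncomputable def Cg {d : ℕ} (ρ : Matrix (Fin d) (Fin d) ℂ) : ℝ :=
  1 - sSup {x : ℝ | ∃ σ : Matrix (Fin d) (Fin d) ℂ, IsIncoherent σ ∧ x = fid ρ σ}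

/-- The projector `|ψ_d⟩⟨ψ_d|` onto the maximally coherent state, with all entries `1/d`. -/
noncomputable def psiProj (d : ℕ) : Matrix (Fin d) (Fin d) ℂ :=
  Matrix.of fun _ _ => (1 / d : ℂ)

/-- The maximally coherent mixed state `ρ_m = p |ψ_d⟩⟨ψ_d| + ((1-p)/d) I_d`. -/
noncomputable def rhoM (d : ℕ) (p : ℝ) : Matrix (Fin d) (Fin d) ℂ :=
  (p : ℂ) • psiProj d + (((1 - p) / d : ℝ) : ℂ) • (1 : Matrix (Fin d) (Fin d) ℂ)

noncomputable def Matrix.PosSemidef.sqrt {d : ℕ} {A : Matrix (Fin d) (Fin d) ℂ}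
    (h : A.PosSemidef) : Matrix (Fin d) (Fin d) ℂ :=
  (h.1.eigenvectorUnitary : Matrix (Fin d) (Fin d) ℂ) *
    Matrix.diagonal ((↑) ∘ (√·) ∘ h.1.eigenvalues) *
      (star h.1.eigenvectorUnitary : Matrix (Fin d) (Fin d) ℂ)

open scoped MatrixOrder in
theorem Matrix.PosSemidef.eq_sqrt_of_sq_eq {d : ℕ} {A B : Matrix (Fin d) (Fin d) ℂ}
    (hB : B.PosSemidef) (hA : A.PosSemidef) (hsq : B ^ 2 = A) : B = hA.sqrt := by
  have e : hA.sqrt = cfc Real.sqrt A := by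
    rw [hA.1.cfc_eq]; rfl
  have hAn : 0 ≤ A := hA.nonneg
  have hBn : 0 ≤ B := hB.nonneg
  rw [e, ← cfcₙ_eq_cfc, ← CFC.sqrt_eq_real_sqrt A, ← hsq, CFC.sqrt_sq B]

section helpers
open Matrix

lemma psiProj_herm (d : ℕ) : (psiProj d).IsHermitian := by
  ext i j
  simp [psiProj, conjTranspose_apply]

lemma psiProj_sq (d : ℕ) (hd : 0 < d) : psiProj d * psiProj d = psiProj d := by
  ext i j
  simp [psiProj, mul_apply, Finset.sum_const]
  have hdc : (d:ℂ) ≠ 0 := by exact_mod_cast hd.ne'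
  field_simp

lemma psiProj_psd (d : ℕ) (hd : 0 < d) : (psiProj d).PosSemidef := by
  have h : psiProj d = psiProj d * (psiProj d)ᴴ := by
    rw [(psiProj_herm d).eq, psiProj_sq d hd]
  rw [h]
  exact posSemidef_self_mul_conjTranspose _

lemma smul_psd {d : ℕ} {A : Matrix (Fin d) (Fin d) ℂ} (hA : A.PosSemidef) (c : ℝ) (hc : 0 ≤ c) :
    ((c : ℂ) • A).PosSemidef := by
  constructor
  · unfold IsHermitian
    rw [conjTranspose_smul, hA.1.eq]
    congr 1
    simp
  · exact (hA.smul (Complex.zero_le_real.mpr hc)).2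

lemma rhoM_psd (d : ℕ) (hd : 0 < d) {p : ℝ} (hp0 : 0 ≤ p) (hp1 : p ≤ 1) :
    (rhoM d p).PosSemidef := by
  apply PosSemidef.add
  · exact smul_psd (psiProj_psd d hd) p hp0
  · apply smul_psd PosSemidef.one ((1-p)/d)
    have : (0:ℝ) < d := by exact_mod_cast hd
    have : 0 ≤ 1 - p := by linarith
    positivity

lemma rhoM_apply (d : ℕ) (p : ℝ) (i j : Fin d) :
    rhoM d p i j = (p / d : ℂ) + if i = j then (((1 - p) / d : ℝ) : ℂ) else 0 := by
  simp [rhoM, psiProj, one_apply, mul_ite]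
  rw [div_eq_mul_inv]

lemma one_sub_psiProj_psd (d : ℕ) (hd : 0 < d) : (1 - psiProj d).PosSemidef := by
  have hherm : (1 - psiProj d).IsHermitian := by
    unfold IsHermitian
    rw [conjTranspose_sub, conjTranspose_one, (psiProj_herm d).eq]
  have h : 1 - psiProj d = (1 - psiProj d) * (1 - psiProj d)ᴴ := by
    rw [hherm.eq]
    rw [sub_mul, one_mul, mul_sub, mul_one, psiProj_sq d hd, sub_self, sub_zero]
  rw [h]
  exact posSemidef_self_mul_conjTranspose _

lemma msqrt_of_psd {d : ℕ} {A B : Matrix (Fin d) (Fin d) ℂ} (hB : B.PosSemidef)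
    (hsq : B ^ 2 = A) : msqrt A = B := by
  have hA : A.PosSemidef := hsq ▸ hB.pow 2
  rw [msqrt, dif_pos hA]
  exact (hB.eq_sqrt_of_sq_eq hA hsq).symm

lemma msqrt_diagonal {d : ℕ} (q : Fin d → ℝ) (hq : ∀ i, 0 ≤ q i) :
    msqrt (diagonal (fun i => (q i : ℂ))) = diagonal (fun i => (Real.sqrt (q i) : ℂ)) := by
  apply msqrt_of_psd
  · exact PosSemidef.diagonal (fun i => Complex.zero_le_real.mpr (Real.sqrt_nonneg _))
  · rw [pow_two, diagonal_mul_diagonal]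
    ext i j
    by_cases h : i = j
    · subst h
      simp [diagonal_apply_eq, ← Complex.ofReal_mul, Real.mul_self_sqrt (hq i)]
    · simp [diagonal_apply_ne _ h]

lemma msqrt_scaled_rho (d : ℕ) (hd : 0 < d) {p : ℝ} (hp0 : 0 ≤ p) (hp1 : p ≤ 1) :
    msqrt ((((1:ℝ)/d : ℝ) : ℂ) • rhoM d p)
      = ((Real.sqrt (1-p)/d : ℝ) : ℂ) • 1
        + (((Real.sqrt (d*p+1-p) - Real.sqrt (1-p))/d : ℝ) : ℂ) • psiProj d := by
  set x : ℝ := Real.sqrt (1-p)/d with hx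
  set y : ℝ := (Real.sqrt (d*p+1-p) - Real.sqrt (1-p))/d with hy
  have hdR : (0:ℝ) < d := by exact_mod_cast hd
  have h1p : 0 ≤ 1 - p := by linarith
  have hdp : 0 ≤ d*p+1-p := by nlinarith
  have hx0 : 0 ≤ x := by positivity
  have hxysum : x + y = Real.sqrt (d*p+1-p)/d := by rw [hx, hy]; ring
  have hxy : 0 ≤ x + y := by rw [hxysum]; positivity
  have hrx : x * x = (1-p)/d^2 := by
    rw [hx, div_mul_div_comm, Real.mul_self_sqrt h1p]; ring
  have hry : (x*y + y*x) + y*y = p/d := by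
    have h2 : (x+y)*(x+y) - x*x = p/d := by
      rw [hxysum, hrx, div_mul_div_comm, Real.mul_self_sqrt hdp]
      field_simp
      ring
    nlinarith [h2]
  apply msqrt_of_psd
  · have : ((x:ℂ) • 1 + (y:ℂ) • psiProj d)
        = (x:ℂ) • (1 - psiProj d) + (((x+y : ℝ)):ℂ) • psiProj d := by
      push_cast
      module
    rw [this]
    exact PosSemidef.add (smul_psd (one_sub_psiProj_psd d hd) x hx0)
      (smul_psd (psiProj_psd d hd) (x+y) hxy)
  · have hPP := psiProj_sq d hd
    have hxx : (x:ℂ) * (x:ℂ) = (((1-p)/d^2 : ℝ) : ℂ) := by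
      rw [← Complex.ofReal_mul, hrx]
    have hyy : ((x:ℂ)*(y:ℂ) + (y:ℂ)*(x:ℂ)) + (y:ℂ)*(y:ℂ) = ((p/d : ℝ) : ℂ) := by
      rw [← Complex.ofReal_mul, ← Complex.ofReal_mul, ← Complex.ofReal_mul,
        ← Complex.ofReal_add, ← Complex.ofReal_add, hry]
    rw [pow_two]
    simp only [add_mul, mul_add, smul_mul_smul_comm, one_mul, mul_one, hPP]
    rw [rhoM, smul_add, smul_smul, smul_smul]
    have c1 : ((((1:ℝ)/d : ℝ)):ℂ) * (p:ℂ) = ((p/d : ℝ) : ℂ) := by push_cast; ring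
    have c2 : ((((1:ℝ)/d : ℝ)):ℂ) * (((1-p)/d : ℝ):ℂ) = (((1-p)/d^2 : ℝ) : ℂ) := by
      push_cast; ring
    rw [c1, c2, ← hxx, ← hyy]
    match_scalars <;> ring

lemma g_anti (n T c m : ℝ) (hn : 1 ≤ n) (hc : T ≤ (n+1)*c) (hcm : c ≤ m) (hmT : m ≤ T) :
    Real.sqrt m + Real.sqrt (n*(T-m)) ≤ Real.sqrt c + Real.sqrt (n*(T-c)) := by
  have hc0 : 0 ≤ c := by nlinarith
  set a := Real.sqrt c with ha
  set x := Real.sqrt m with hxd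
  set ym := Real.sqrt (n*(T-m)) with nym
  set yc := Real.sqrt (n*(T-c)) with nyc
  have ha2 : a^2 = c := Real.sq_sqrt hc0
  have hx2 : x^2 = m := Real.sq_sqrt (le_trans hc0 hcm)
  have hym2 : ym^2 = n*(T-m) := Real.sq_sqrt (by nlinarith)
  have hyc2 : yc^2 = n*(T-c) := Real.sq_sqrt (by nlinarith)
  have ha0 : 0 ≤ a := Real.sqrt_nonneg _
  have hx0 : 0 ≤ x := Real.sqrt_nonneg _
  have hym0 : 0 ≤ ym := Real.sqrt_nonneg _
  have hyc0 : 0 ≤ yc := Real.sqrt_nonneg _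
  have hax : a ≤ x := Real.sqrt_le_sqrt hcm
  have hymyc : ym ≤ yc := Real.sqrt_le_sqrt (by nlinarith)
  have hn0 : (0:ℝ) ≤ n := by linarith
  have h1 : ym ≤ n * x := by
    rw [nym, hxd]
    calc Real.sqrt (n*(T-m)) ≤ Real.sqrt (n^2 * m) := by
          apply Real.sqrt_le_sqrt
          have h' : T - m ≤ n*m := by nlinarith
          nlinarith [mul_le_mul_of_nonneg_left h' hn0]
      _ = n * Real.sqrt m := by
          rw [Real.sqrt_mul (by positivity), Real.sqrt_sq hn0]
  have h2 : yc ≤ n * a := by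
    rw [nyc, ha]
    calc Real.sqrt (n*(T-c)) ≤ Real.sqrt (n^2 * c) := by
          apply Real.sqrt_le_sqrt
          have h' : T - c ≤ n*c := by nlinarith
          nlinarith [mul_le_mul_of_nonneg_left h' hn0]
      _ = n * Real.sqrt c := by
          rw [Real.sqrt_mul (by positivity), Real.sqrt_sq hn0]
  clear_value a x ym yc
  clear ha hxd nym nyc
  rcases eq_or_lt_of_le (add_nonneg hym0 hyc0) with h | h
  · have hym : ym = 0 := by linarith
    have hyc : yc = 0 := by linarith
    have hxa : x = a := by nlinarith
    rw [hxa, hym, hyc]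
  · have key : 0 ≤ (x - a) * (n*(x+a) - (ym + yc)) :=
      mul_nonneg (by linarith) (by linarith)
    have hid : yc^2 - ym^2 = n * (x^2 - a^2) := by rw [hyc2, hym2, hx2, ha2]; ring
    nlinarith [key, hid, h]

lemma sum_sqrt_le {d : ℕ} (hd : 2 ≤ d) (lam : Fin d → ℝ) (h0 : ∀ i, 0 ≤ lam i)
    (hsum : ∑ i, lam i = 1/(d:ℝ)) (j : Fin d) (hmax : ∀ i, lam i ≤ lam j)
    {lo : ℝ} (hlo : lo ≤ lam j) (hlo2 : 1/(d:ℝ)^2 ≤ lo) :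
    ∑ i, Real.sqrt (lam i) ≤ Real.sqrt lo + Real.sqrt (((d:ℝ)-1)*(1/(d:ℝ) - lo)) := by
  have hdR : (2:ℝ) ≤ d := by exact_mod_cast hd
  have hdpos : (0:ℝ) < d := by linarith
  have hsplit : ∑ i, lam i = lam j + ∑ i ∈ Finset.univ.erase j, lam i :=
    (Finset.add_sum_erase _ _ (Finset.mem_univ j)).symm
  have hsplit2 : ∑ i, Real.sqrt (lam i)
      = Real.sqrt (lam j) + ∑ i ∈ Finset.univ.erase j, Real.sqrt (lam i) :=
    (Finset.add_sum_erase _ _ (Finset.mem_univ j)).symm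
  have hcard : ((Finset.univ.erase j).card : ℝ) = (d:ℝ) - 1 := by
    rw [Finset.card_erase_of_mem (Finset.mem_univ j)]
    simp
    rw [Nat.cast_sub (by omega)]
    simp
  have hjT : lam j ≤ 1/(d:ℝ) := by
    rw [← hsum, hsplit]
    have : 0 ≤ ∑ i ∈ Finset.univ.erase j, lam i :=
      Finset.sum_nonneg fun i _ => h0 i
    linarith
  have hS : ∑ i ∈ Finset.univ.erase j, Real.sqrt (lam i)
      ≤ Real.sqrt (((d:ℝ)-1) * (1/(d:ℝ) - lam j)) := by
    have hS0 : 0 ≤ ∑ i ∈ Finset.univ.erase j, Real.sqrt (lam i) :=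
      Finset.sum_nonneg fun i _ => Real.sqrt_nonneg _
    have hcs := sq_sum_le_card_mul_sum_sq (s := Finset.univ.erase j)
      (f := fun i => Real.sqrt (lam i))
    rw [← Real.sqrt_sq hS0]
    apply Real.sqrt_le_sqrt
    calc (∑ i ∈ Finset.univ.erase j, Real.sqrt (lam i))^2
        ≤ ((Finset.univ.erase j).card : ℝ) * ∑ i ∈ Finset.univ.erase j, (Real.sqrt (lam i))^2 := by
          exact_mod_cast hcs
      _ = ((d:ℝ)-1) * (1/(d:ℝ) - lam j) := by
          rw [hcard]
          congr 1
          have : ∀ i ∈ Finset.univ.erase j, (Real.sqrt (lam i))^2 = lam i :=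
            fun i _ => Real.sq_sqrt (h0 i)
          rw [Finset.sum_congr rfl this]
          linarith [hsplit.symm.trans hsum]
  rw [hsplit2]
  have hganti := g_anti ((d:ℝ)-1) (1/(d:ℝ)) lo (lam j) (by linarith)
    (by
      have : ((d:ℝ)-1+1) = (d:ℝ) := by ring
      rw [this]
      rw [div_le_iff₀ (by positivity : (0:ℝ) < (d:ℝ)^2)] at hlo2
      rw [div_le_iff₀ hdpos]
      nlinarith
      ) hlo hjT
  linarith

lemma keyA (d : ℕ) (hd : 2 ≤ d) {p : ℝ} (hp0 : 0 ≤ p) (hp1 : p ≤ 1) :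
    ((d:ℝ)-2) * Real.sqrt (1-p) + 2 * Real.sqrt ((d:ℝ)*p+1-p) ≤ (d:ℝ) * Real.sqrt (1+p) := by
  have hdR : (2:ℝ) ≤ d := by exact_mod_cast hd
  set u := Real.sqrt (1-p) with hu
  set w := Real.sqrt ((d:ℝ)*p+1-p) with hw
  set s := Real.sqrt (1+p) with hs
  have hu2 : u^2 = 1-p := Real.sq_sqrt (by linarith)
  have hw2 : w^2 = (d:ℝ)*p+1-p := Real.sq_sqrt (by nlinarith)
  have hs2 : s^2 = 1+p := Real.sq_sqrt (by linarith)
  have hu0 : 0 ≤ u := Real.sqrt_nonneg _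
  have hw0 : 0 ≤ w := Real.sqrt_nonneg _
  have hs0 : 0 ≤ s := Real.sqrt_nonneg _
  clear_value u w s
  -- sub-claim : 2*u*w ≤ 2 + p*(d-2)
  have sub : 2*u*w ≤ 2 + p*((d:ℝ)-2) := by
    have h1 : (2*u*w)^2 ≤ (2 + p*((d:ℝ)-2))^2 := by
      have : (2*u*w)^2 = 4*(1-p)*((d:ℝ)*p+1-p) := by
        rw [mul_pow, mul_pow, hu2, hw2]; ring
      rw [this]
      nlinarith [sq_nonneg (p*(d:ℝ))]
    have h2 : 0 ≤ 2*u*w := by positivity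
    have h3 : 0 ≤ 2 + p*((d:ℝ)-2) := by nlinarith
    nlinarith
  have h1 : (((d:ℝ)-2)*u + 2*w)^2 ≤ ((d:ℝ)*s)^2 := by
    have e1 : (((d:ℝ)-2)*u + 2*w)^2 = ((d:ℝ)-2)^2*(1-p) + 4*((d:ℝ)*p+1-p) + 2*((d:ℝ)-2)*(2*u*w) := by
      rw [← hu2, ← hw2]; ring
    have e2 : ((d:ℝ)*s)^2 = (d:ℝ)^2*(1+p) := by rw [mul_pow, hs2]
    rw [e1, e2]
    nlinarith [mul_le_mul_of_nonneg_left sub (by linarith : (0:ℝ) ≤ 2*((d:ℝ)-2))]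
  have h2 : 0 ≤ ((d:ℝ)-2)*u + 2*w := by
    nlinarith [mul_nonneg (by linarith : (0:ℝ) ≤ (d:ℝ)-2) hu0]
  have h3 : 0 ≤ (d:ℝ)*s := by positivity
  nlinarith

lemma Ksq_bounds (d : ℕ) (hd : 2 ≤ d) {p : ℝ} (hp0 : 0 ≤ p) (hp1 : p ≤ 1) :
    1/(d:ℝ) ≤ ((Real.sqrt ((d:ℝ)*p+1-p) + ((d:ℝ)-1)*Real.sqrt (1-p))/d)^2 ∧
    ((Real.sqrt ((d:ℝ)*p+1-p) + ((d:ℝ)-1)*Real.sqrt (1-p))/d)^2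
      ≤ 1/(d:ℝ) + (((d:ℝ)-1)/d) * Real.sqrt (1-p^2) := by
  have hdR : (2:ℝ) ≤ d := by exact_mod_cast hd
  have hA := keyA d hd hp0 hp1
  set u := Real.sqrt (1-p) with hu
  set w := Real.sqrt ((d:ℝ)*p+1-p) with hw
  set s := Real.sqrt (1+p) with hs
  have ht : Real.sqrt (1-p^2) = u * s := by
    rw [hu, hs, ← Real.sqrt_mul (by linarith)]
    congr 1; ring
  have hu2 : u^2 = 1-p := Real.sq_sqrt (by linarith)
  have hw2 : w^2 = (d:ℝ)*p+1-p := Real.sq_sqrt (by nlinarith)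
  have hs2 : s^2 = 1+p := Real.sq_sqrt (by linarith)
  have hu0 : 0 ≤ u := Real.sqrt_nonneg _
  have hw0 : 0 ≤ w := Real.sqrt_nonneg _
  have hs0 : 0 ≤ s := Real.sqrt_nonneg _
  rw [ht]
  clear_value u w s
  have hd0 : (0:ℝ) < d := by linarith
  constructor
  · rw [div_pow, le_div_iff₀ (by positivity)]
    have : (w + ((d:ℝ)-1)*u)^2 ≥ w^2 + ((d:ℝ)-1)*u^2 := by
      have e : (w + ((d:ℝ)-1)*u)^2 - (w^2 + ((d:ℝ)-1)*u^2)
          = 2*((d:ℝ)-1)*(u*w) + ((d:ℝ)-1)*(((d:ℝ)-2)*u^2) := by ring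
      have t1 : 0 ≤ 2*((d:ℝ)-1)*(u*w) :=
        mul_nonneg (by linarith) (mul_nonneg hu0 hw0)
      have t2 : 0 ≤ ((d:ℝ)-1)*(((d:ℝ)-2)*u^2) :=
        mul_nonneg (by linarith) (mul_nonneg (by linarith) (sq_nonneg u))
      linarith
    calc 1/(d:ℝ) * (d:ℝ)^2 = (d:ℝ) := by field_simp
      _ ≤ w^2 + ((d:ℝ)-1)*u^2 := by rw [hw2, hu2]; nlinarith
      _ ≤ (w + ((d:ℝ)-1)*u)^2 := this
  · rw [div_pow, div_le_iff₀ (by positivity)]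
    have expand : (1/(d:ℝ) + (((d:ℝ)-1)/d) * (u*s)) * (d:ℝ)^2 = (d:ℝ) + (d:ℝ)*((d:ℝ)-1)*u*s := by
      field_simp
    rw [expand]
    have key : (d:ℝ) + (d:ℝ)*((d:ℝ)-1)*u*s - (w + ((d:ℝ)-1)*u)^2
        = ((d:ℝ)-1)*u*((d:ℝ)*s - 2*w - ((d:ℝ)-2)*u) + ((d:ℝ) - w^2 - ((d:ℝ)-1)*u^2) := by
      ring
    have hzero : (d:ℝ) - w^2 - ((d:ℝ)-1)*u^2 = 0 := by rw [hw2, hu2]; ring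
    nlinarith [mul_nonneg (mul_nonneg (by linarith : (0:ℝ) ≤ (d:ℝ)-1) hu0)
      (by linarith : (0:ℝ) ≤ (d:ℝ)*s - 2*w - ((d:ℝ)-2)*u)]

open Matrix

lemma psd_diag_nonneg {d : ℕ} {σ : Matrix (Fin d) (Fin d) ℂ} (h : σ.PosSemidef) (i : Fin d) :
    0 ≤ σ i i := by
  exact h.diag_nonneg

lemma trace_eq_sum_eig {d : ℕ} {M : Matrix (Fin d) (Fin d) ℂ} (hM : M.IsHermitian) :
    M.trace = ∑ i, (hM.eigenvalues i : ℂ) := by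
  conv_lhs => rw [hM.spectral_theorem]
  rw [Unitary.conjStarAlgAut_apply, trace_mul_cycle]
  rw [(Matrix.mem_unitaryGroup_iff').mp (hM.eigenvectorUnitary).2]
  rw [one_mul, trace_diagonal]
  rfl

lemma trace_sqrt {d : ℕ} {M : Matrix (Fin d) (Fin d) ℂ} (hM : M.PosSemidef) :
    hM.sqrt.trace = ∑ i, (Real.sqrt (hM.1.eigenvalues i) : ℂ) := by
  rw [Matrix.PosSemidef.sqrt, trace_mul_cycle]
  rw [(Matrix.mem_unitaryGroup_iff').mp (hM.1.eigenvectorUnitary).2]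
  rw [one_mul, trace_diagonal]
  rfl
lemma rayleigh {d : ℕ} {M : Matrix (Fin d) (Fin d) ℂ} (hM : M.IsHermitian)
    (v : Fin d → ℂ) (c : ℝ) (hc : ∀ i, hM.eigenvalues i ≤ c) :
    (dotProduct (star v) (M *ᵥ v)).re ≤ c * (dotProduct (star v) v).re := by
  set U : Matrix (Fin d) (Fin d) ℂ := (hM.eigenvectorUnitary : Matrix (Fin d) (Fin d) ℂ) with hUdef
  have hU : Uᴴ * U = 1 := (Matrix.mem_unitaryGroup_iff').mp (hM.eigenvectorUnitary).2
  set w : Fin d → ℂ := Uᴴ *ᵥ v with hw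
  have hsw : star w = star v ᵥ* U := by
    rw [hw, star_mulVec, conjTranspose_conjTranspose]
  have h1 : dotProduct (star v) (M *ᵥ v)
      = dotProduct (star w) ((diagonal (RCLike.ofReal ∘ hM.eigenvalues) : Matrix (Fin d) (Fin d) ℂ) *ᵥ w) := by
    conv_lhs => rw [hM.spectral_theorem]
    rw [Unitary.conjStarAlgAut_apply, hsw, hw]
    rw [← mulVec_mulVec, ← mulVec_mulVec, dotProduct_mulVec]
    rfl
  have h2 : dotProduct (star v) v = dotProduct (star w) w := by
    have hU2 : U * Uᴴ = 1 := (Matrix.mem_unitaryGroup_iff).mp (hM.eigenvectorUnitary).2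
    rw [hsw, hw, dotProduct_mulVec, vecMul_vecMul, hU2, vecMul_one]
  rw [h1, h2]
  have h3 : ∀ i : Fin d, (starRingEnd ℂ (w i) * ((diagonal (RCLike.ofReal ∘ hM.eigenvalues) : Matrix (Fin d) (Fin d) ℂ) *ᵥ w) i).re
      = hM.eigenvalues i * Complex.normSq (w i) := by
    intro i
    rw [mulVec_diagonal]
    simp [Complex.normSq_apply, Complex.mul_re]
    ring
  have h4 : ∀ i : Fin d, (starRingEnd ℂ (w i) * w i).re = Complex.normSq (w i) := by
    intro i; simp [Complex.normSq_apply, Complex.mul_re]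
  simp only [dotProduct, Complex.re_sum, Pi.star_apply, RCLike.star_def]
  rw [Finset.sum_congr rfl (fun i _ => h3 i), Finset.sum_congr rfl (fun i _ => h4 i),
    Finset.mul_sum]
  exact Finset.sum_le_sum fun i _ => mul_le_mul_of_nonneg_right (hc i) (Complex.normSq_nonneg _)

lemma fid_le {d : ℕ} (hd : 2 ≤ d) {p : ℝ} (hp0 : 0 ≤ p) (hp1 : p ≤ 1)
    {σ : Matrix (Fin d) (Fin d) ℂ} (hσ : IsIncoherent σ) :
    fid (rhoM d p) σ
      ≤ ((Real.sqrt ((d:ℝ)*p+1-p) + ((d:ℝ)-1)*Real.sqrt (1-p))/d)^2 := by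
  obtain ⟨⟨hpsd, htr⟩, hdiag⟩ := hσ
  have hdpos : 0 < d := by omega
  have hdR : (2:ℝ) ≤ d := by exact_mod_cast hd
  have hd0 : (0:ℝ) < d := by linarith
  set q : Fin d → ℝ := fun i => (σ i i).re with hq
  have hq0 : ∀ i, 0 ≤ q i := fun i => (Complex.nonneg_iff.mp (psd_diag_nonneg hpsd i)).1
  have hσeq : σ = diagonal (fun i => ((q i : ℝ) : ℂ)) := by
    ext i j
    by_cases h : i = j
    · subst h
      rw [diagonal_apply_eq]
      have him := (Complex.nonneg_iff.mp (psd_diag_nonneg hpsd i)).2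
      exact Complex.ext rfl him.symm
    · rw [diagonal_apply_ne _ h, hdiag h]
  have hqsum : ∑ i, q i = 1 := by
    have h1 : (σ.trace).re = 1 := by rw [htr]; rfl
    rw [trace, Complex.re_sum] at h1
    exact h1
  have hms : msqrt σ = diagonal (fun i => (Real.sqrt (q i) : ℂ)) := by
    rw [hσeq]; exact msqrt_diagonal q hq0
  set D : Matrix (Fin d) (Fin d) ℂ := diagonal (fun i => (Real.sqrt (q i) : ℂ)) with hD
  have hDH : Dᴴ = D := by
    rw [hD, diagonal_conjTranspose]
    ext i j
    rcases eq_or_ne i j with h | h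
    · subst h; simp [diagonal_apply_eq, Pi.star_apply, Complex.conj_ofReal]
    · simp [diagonal_apply_ne _ h]
  set M : Matrix (Fin d) (Fin d) ℂ := D * rhoM d p * D with hM
  have hMpsd : M.PosSemidef := by
    have := (rhoM_psd d hdpos hp0 hp1).mul_mul_conjTranspose_same D
    rwa [hDH] at this
  have hMapply : ∀ i j, M i j
      = (Real.sqrt (q i) : ℂ) * rhoM d p i j * (Real.sqrt (q j) : ℂ) := by
    intro i j
    rw [hM, hD, mul_diagonal, diagonal_mul]
  have hdc : (d:ℂ) ≠ 0 := by exact_mod_cast hd0.ne'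
  have hqq : ∀ i, (Real.sqrt (q i) : ℂ) * (Real.sqrt (q i) : ℂ) = ((q i : ℝ) : ℂ) :=
    fun i => by rw [← Complex.ofReal_mul, Real.mul_self_sqrt (hq0 i)]
  -- trace of M and sum of eigenvalues
  set lam := hMpsd.1.eigenvalues with hlam
  have htrM : ∑ i, lam i = 1/(d:ℝ) := by
    have h1 : M.trace = (((1:ℝ)/(d:ℝ) : ℝ) : ℂ) := by
      rw [trace]
      have hdiagM : ∀ i, M.diag i = ((q i / (d:ℝ) : ℝ) : ℂ) := by
        intro i
        show M i i = _
        rw [hMapply, rhoM_apply, if_pos rfl]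
        have h2 : (p:ℂ)/(d:ℂ) + (((1-p)/(d:ℝ) : ℝ) : ℂ) = 1/(d:ℂ) := by
          push_cast
          field_simp
          ring
        have h3 : ((q i / (d:ℝ) : ℝ) : ℂ) = (q i : ℂ) / (d:ℂ) := by push_cast; ring
        rw [h2, h3]
        linear_combination (1/(d:ℂ)) * hqq i
      calc ∑ i, M.diag i = ∑ i, ((q i / (d:ℝ) : ℝ) : ℂ) :=
            Finset.sum_congr rfl (fun i _ => hdiagM i)
        _ = (((1:ℝ)/(d:ℝ) : ℝ) : ℂ) := by
            rw [← Complex.ofReal_sum]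
            congr 1
            rw [← Finset.sum_div, hqsum]
    have h2 := trace_eq_sum_eig hMpsd.1
    rw [h1] at h2
    have h3 : ((1:ℝ)/(d:ℝ)) = ∑ i, lam i := by exact_mod_cast h2
    exact h3.symm
  have hlam0 : ∀ i, 0 ≤ lam i := hMpsd.eigenvalues_nonneg
  obtain ⟨j, -, hj⟩ := Finset.exists_max_image Finset.univ lam ⟨⟨0, by omega⟩, Finset.mem_univ _⟩
  -- Rayleigh bound
  set v : Fin d → ℂ := fun i => (Real.sqrt (q i) : ℂ) with hv
  have hstarv : star v = v := by
    funext i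
    simp only [Pi.star_apply, hv, RCLike.star_def]
    exact Complex.conj_ofReal _
  have hSc : ∑ i, ((q i : ℝ) : ℂ) = 1 := by
    rw [← Complex.ofReal_sum, hqsum, Complex.ofReal_one]
  have hvv : dotProduct (star v) v = 1 := by
    rw [hstarv, dotProduct]
    rw [Finset.sum_congr rfl (fun i _ => hqq i), hSc]
  have hterm : ∀ i, v i * (M *ᵥ v) i
      = (p:ℂ)/(d:ℂ) * (q i : ℂ) + (((1-p)/(d:ℝ) : ℝ) : ℂ) * (q i : ℂ)^2 := by
    intro i
    have hMv : (M *ᵥ v) i = ∑ j, M i j * v j := rfl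
    rw [hMv, Finset.mul_sum]
    have hterm2 : ∀ k, v i * (M i k * v k) = (q i : ℂ) * rhoM d p i k * (q k : ℂ) := by
      intro k
      rw [hMapply]
      show (Real.sqrt (q i):ℂ) * ((Real.sqrt (q i):ℂ) * rhoM d p i k * (Real.sqrt (q k):ℂ) * (Real.sqrt (q k):ℂ)) = _
      linear_combination (rhoM d p i k * ((Real.sqrt (q k):ℂ) * (Real.sqrt (q k):ℂ))) * hqq i
        + ((q i : ℂ) * rhoM d p i k) * hqq k
    rw [Finset.sum_congr rfl (fun k _ => hterm2 k)]
    have hterm3 : ∀ k, (q i : ℂ) * rhoM d p i k * (q k : ℂ)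
        = (p:ℂ)/(d:ℂ) * ((q i : ℂ) * (q k : ℂ))
          + (if i = k then (((1-p)/(d:ℝ) : ℝ) : ℂ) * ((q i : ℂ) * (q k : ℂ)) else 0) := by
      intro k
      rw [rhoM_apply]
      rcases eq_or_ne i k with h | h
      · subst h; rw [if_pos rfl, if_pos rfl]; push_cast; ring
      · rw [if_neg h, if_neg h]; push_cast; ring
    rw [Finset.sum_congr rfl (fun k _ => hterm3 k), Finset.sum_add_distrib,
      Finset.sum_ite_eq Finset.univ i, if_pos (Finset.mem_univ i)]
    rw [← Finset.mul_sum, ← Finset.mul_sum, hSc]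
    ring
  have hvMv : dotProduct (star v) (M *ᵥ v)
      = ((p/(d:ℝ) + (1-p)/(d:ℝ) * ∑ i, (q i)^2 : ℝ) : ℂ) := by
    rw [hstarv, dotProduct, Finset.sum_congr rfl (fun i _ => hterm i)]
    rw [Finset.sum_add_distrib, ← Finset.mul_sum, ← Finset.mul_sum]
    push_cast
    rw [hSc]
    ring
  have hq2 : 1/(d:ℝ) ≤ ∑ i, (q i)^2 := by
    have hcs := sq_sum_le_card_mul_sum_sq (s := (Finset.univ : Finset (Fin d))) (f := q)
    rw [hqsum] at hcs
    simp only [Finset.card_univ, Fintype.card_fin] at hcs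
    rw [div_le_iff₀ hd0]
    nlinarith
  set lo : ℝ := ((d:ℝ)*p + 1 - p)/(d:ℝ)^2 with hlo_def
  have hloj : lo ≤ lam j := by
    have hray := rayleigh hMpsd.1 v (lam j) (fun i => hj i (Finset.mem_univ i))
    rw [hvv, hvMv] at hray
    rw [Complex.ofReal_re, Complex.one_re, mul_one] at hray
    have e1 : lo = p/(d:ℝ) + (1-p)/(d:ℝ) * (1/(d:ℝ)) := by
      rw [hlo_def]; field_simp; ring
    have e2 : (1-p)/(d:ℝ) * (1/(d:ℝ)) ≤ (1-p)/(d:ℝ) * ∑ i, (q i)^2 :=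
      mul_le_mul_of_nonneg_left hq2 (div_nonneg (by linarith) hd0.le)
    linarith
  have hlo2 : 1/(d:ℝ)^2 ≤ lo := by
    rw [hlo_def, div_le_div_iff_of_pos_right (by positivity)]
    nlinarith
  have hsumle := sum_sqrt_le hd lam hlam0 htrM j (fun i => hj i (Finset.mem_univ i)) hloj hlo2
  -- identify the bound with K
  have hdp' : 0 ≤ (d:ℝ)*p+1-p := by nlinarith
  have h1p : 0 ≤ 1-p := by linarith
  have eK1 : Real.sqrt lo = Real.sqrt ((d:ℝ)*p+1-p)/d := by
    rw [hlo_def]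
    rw [show ((d:ℝ)*p + 1 - p)/(d:ℝ)^2 = (Real.sqrt ((d:ℝ)*p+1-p)/d)^2 by
      rw [div_pow, Real.sq_sqrt hdp']]
    exact Real.sqrt_sq (by positivity)
  have eK2 : Real.sqrt (((d:ℝ)-1)*(1/(d:ℝ) - lo)) = ((d:ℝ)-1)*Real.sqrt (1-p)/d := by
    rw [show ((d:ℝ)-1)*(1/(d:ℝ) - lo) = (((d:ℝ)-1)*Real.sqrt (1-p)/d)^2 by
      rw [div_pow, mul_pow, Real.sq_sqrt h1p, hlo_def]
      field_simp
      ring]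
    exact Real.sqrt_sq (div_nonneg (mul_nonneg (by linarith) (Real.sqrt_nonneg _)) hd0.le)
  have hKform : Real.sqrt lo + Real.sqrt (((d:ℝ)-1)*(1/(d:ℝ) - lo))
      = (Real.sqrt ((d:ℝ)*p+1-p) + ((d:ℝ)-1)*Real.sqrt (1-p))/d := by
    rw [eK1, eK2, ← add_div]
  -- compute fid
  have htr_sqrt : (msqrt M).trace.re = ∑ i, Real.sqrt (lam i) := by
    rw [msqrt, dif_pos hMpsd]
    change hMpsd.sqrt.trace.re = _
    rw [trace_sqrt hMpsd, Complex.re_sum]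
    exact Finset.sum_congr rfl (fun i _ => Complex.ofReal_re _)
  have hfid : fid (rhoM d p) σ = ((msqrt M).trace.re)^2 := by
    rw [fid, hms, ← hM]
  rw [hfid, htr_sqrt]
  have hnn : 0 ≤ ∑ i, Real.sqrt (lam i) :=
    Finset.sum_nonneg fun i _ => Real.sqrt_nonneg _
  have := hKform ▸ hsumle
  exact pow_le_pow_left₀ hnn this 2


lemma fid_maxmix (d : ℕ) (hd : 2 ≤ d) {p : ℝ} (hp0 : 0 ≤ p) (hp1 : p ≤ 1) :
    fid (rhoM d p) (diagonal (fun _ : Fin d => (((1:ℝ)/(d:ℝ) : ℝ) : ℂ)))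
      = ((Real.sqrt ((d:ℝ)*p+1-p) + ((d:ℝ)-1)*Real.sqrt (1-p))/d)^2 := by
  have hdpos : 0 < d := by omega
  have hdR : (2:ℝ) ≤ d := by exact_mod_cast hd
  have hd0 : (0:ℝ) < d := by linarith
  have hdc : (d:ℂ) ≠ 0 := by exact_mod_cast hd0.ne'
  have hmσ : msqrt (diagonal (fun _ : Fin d => (((1:ℝ)/(d:ℝ) : ℝ) : ℂ)))
      = diagonal (fun _ : Fin d => ((Real.sqrt ((1:ℝ)/(d:ℝ)) : ℝ) : ℂ)) :=
    msqrt_diagonal _ (fun _ => by positivity)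
  have hqq : ((Real.sqrt ((1:ℝ)/(d:ℝ)) : ℝ) : ℂ) * ((Real.sqrt ((1:ℝ)/(d:ℝ)) : ℝ) : ℂ)
      = ((((1:ℝ)/(d:ℝ)) : ℝ) : ℂ) := by
    rw [← Complex.ofReal_mul, Real.mul_self_sqrt (by positivity)]
  have hMeq : diagonal (fun _ : Fin d => ((Real.sqrt ((1:ℝ)/(d:ℝ)) : ℝ) : ℂ)) * rhoM d p *
      diagonal (fun _ : Fin d => ((Real.sqrt ((1:ℝ)/(d:ℝ)) : ℝ) : ℂ))
      = ((((1:ℝ)/(d:ℝ)) : ℝ) : ℂ) • rhoM d p := by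
    ext i j
    rw [mul_diagonal, diagonal_mul, Matrix.smul_apply, smul_eq_mul]
    linear_combination (rhoM d p i j) * hqq
  rw [fid, hmσ, hMeq, msqrt_scaled_rho d hdpos hp0 hp1]
  have htrP : (psiProj d).trace = 1 := by
    rw [trace]
    have : ∀ i : Fin d, (psiProj d).diag i = 1/(d:ℂ) := fun i => rfl
    rw [Finset.sum_congr rfl (fun i _ => this i), Finset.sum_const, Finset.card_univ,
      Fintype.card_fin, nsmul_eq_mul]
    field_simp
  have htr1 : (1 : Matrix (Fin d) (Fin d) ℂ).trace = (d:ℂ) := by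
    rw [trace_one]
    simp
  rw [trace_add, trace_smul, trace_smul, htrP, htr1, smul_eq_mul, smul_eq_mul, mul_one]
  have : ((Real.sqrt (1-p)/(d:ℝ) : ℝ) : ℂ) * (d:ℂ)
      + (((Real.sqrt ((d:ℝ)*p+1-p) - Real.sqrt (1-p))/(d:ℝ) : ℝ) : ℂ)
      = (((Real.sqrt ((d:ℝ)*p+1-p) + ((d:ℝ)-1)*Real.sqrt (1-p))/(d:ℝ) : ℝ) : ℂ) := by
    push_cast
    field_simp
    ring
  rw [this, Complex.ofReal_re]

lemma maxmix_incoherent (d : ℕ) (hd : 2 ≤ d) :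
    IsIncoherent (diagonal (fun _ : Fin d => (((1:ℝ)/(d:ℝ) : ℝ) : ℂ))) := by
  refine ⟨⟨PosSemidef.diagonal (fun _ => Complex.zero_le_real.mpr (by positivity)), ?_⟩,
    isDiag_diagonal _⟩
  rw [trace_diagonal]
  rw [Finset.sum_const, Finset.card_univ, Fintype.card_fin, nsmul_eq_mul]
  have hdc : (d:ℂ) ≠ 0 := by
    have : (0:ℝ) < d := by exact_mod_cast (by omega : 0 < d)
    exact_mod_cast this.ne'
  push_cast
  field_simp

/-- Bounds on the geometric coherence of the maximally coherent mixed state. -/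
theorem geometric_coherence_rhoM_bounds {d : ℕ} (hd : 2 ≤ d)
    (p : ℝ) (hp0 : 0 < p) (hp1 : p ≤ 1) :
    1 - 1 / (d : ℝ) - (((d : ℝ) - 1) / d) * Real.sqrt (1 - p ^ 2) ≤ Cg (rhoM d p) ∧
      Cg (rhoM d p) ≤ 1 - 1 / (d : ℝ) := by
  set K : ℝ := (Real.sqrt ((d:ℝ)*p+1-p) + ((d:ℝ)-1)*Real.sqrt (1-p))/d with hK
  set S : Set ℝ := {x : ℝ | ∃ σ : Matrix (Fin d) (Fin d) ℂ, IsIncoherent σ ∧ x = fid (rhoM d p) σ}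
    with hS
  have hub : ∀ x ∈ S, x ≤ K^2 := by
    rintro x ⟨σ, hσ, rfl⟩
    exact fid_le hd hp0.le hp1 hσ
  have hKS : K^2 ∈ S :=
    ⟨diagonal (fun _ : Fin d => (((1:ℝ)/(d:ℝ) : ℝ) : ℂ)), maxmix_incoherent d hd,
      (fid_maxmix d hd hp0.le hp1).symm⟩
  have hsup : sSup S = K^2 :=
    le_antisymm (csSup_le ⟨K^2, hKS⟩ hub) (le_csSup ⟨K^2, hub⟩ hKS)
  have hCg : Cg (rhoM d p) = 1 - K^2 := by
    rw [Cg, ← hS, hsup]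
  obtain ⟨hb1, hb2⟩ := Ksq_bounds d hd hp0.le hp1
  rw [hCg]
  constructor
  · linarith [hb2]
  · linarith [hb1]

end helpers
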